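/- For k ≥ 0 and n > 0, with g = G^{2k+2} D G^{n-1} on {b,c}^* (G(b)=b, G(c)=bc; D(b)=cb, D(c)=c), one has g(b) = b^{2k+2} c b and g(c) = (b^{2k+2} c b)^{n-1} b^{2k+2} c. -/
import Mathlib


/-- The two-letter alphabet `{b, c}`. -/
inductive BC | b | c
deriving DecidableEq, Repr

/-- Apply a substitution (given on letters) to a word. -/
def applyM (h : BC → List BC) (w : List BC) : List BC := w.flatMap h

/-- Composition of substitutions: apply `g` first, then `f`. -/
def compM (f g : BC → List BC) : BC → List BC := fun x => applyM f (g x)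

/-- Iterated composition of a substitution. -/
def powM (f : BC → List BC) : ℕ → (BC → List BC)
  | 0 => fun x => [x]
  | k + 1 => compM f (powM f k)

/-- The `m`-th power (repeated concatenation) of a word. -/
def wpow (w : List BC) : ℕ → List BC
  | 0 => []
  | m + 1 => w ++ wpow w m

/-- The Sturmian generator `G` over `{b, c}`: `G(b) = b`, `G(c) = bc`. -/
def G : BC → List BC
  | BC.b => [BC.b]
  | BC.c => [BC.b, BC.c]

/-- The Sturmian generator `D` over `{b, c}`: `D(b) = cb`, `D(c) = c`. -/
def D : BC → List BC
  | BC.b => [BC.c, BC.b]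
  | BC.c => [BC.c]

lemma applyM_append (h : BC → List BC) (u v : List BC) :
    applyM h (u ++ v) = applyM h u ++ applyM h v := by
  simp [applyM]

lemma applyM_replicate_b (h : BC → List BC) (hb : h BC.b = [BC.b]) (m : ℕ) :
    applyM h (List.replicate m BC.b) = List.replicate m BC.b := by
  induction m with
  | zero => simp [applyM]
  | succ m ih =>
    rw [List.replicate_succ]
    show applyM h ([BC.b] ++ List.replicate m BC.b) = _
    rw [applyM_append, ih]
    simp [applyM, hb, List.replicate_succ]

lemma powG_b (m : ℕ) : powM G m BC.b = [BC.b] := by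
  induction m with
  | zero => rfl
  | succ m ih => simp [powM, compM, ih, applyM, G]

lemma powG_c (m : ℕ) : powM G m BC.c = List.replicate m BC.b ++ [BC.c] := by
  induction m with
  | zero => rfl
  | succ m ih =>
    show applyM G (powM G m BC.c) = _
    rw [ih, applyM_append, applyM_replicate_b G rfl]
    simp [applyM, G, List.replicate_succ']

lemma applyD (m : ℕ) :
    applyM D (List.replicate m BC.b ++ [BC.c]) = wpow [BC.c, BC.b] m ++ [BC.c] := by
  induction m with
  | zero => rfl
  | succ m ih =>
    rw [List.replicate_succ, List.cons_append]
    show applyM D ([BC.b] ++ (List.replicate m BC.b ++ [BC.c])) = _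
    rw [applyM_append, ih]
    simp [applyM, D, wpow]

lemma applyPowG (k m : ℕ) :
    applyM (powM G (2 * k + 2)) (wpow [BC.c, BC.b] m ++ [BC.c]) =
      wpow (List.replicate (2 * k + 2) BC.b ++ [BC.c, BC.b]) m ++
        List.replicate (2 * k + 2) BC.b ++ [BC.c] := by
  induction m with
  | zero =>
    simp [wpow, applyM, powG_c]
  | succ m ih =>
    rw [wpow, List.append_assoc, applyM_append, ih, wpow]
    have : applyM (powM G (2 * k + 2)) [BC.c, BC.b] =
        List.replicate (2 * k + 2) BC.b ++ [BC.c, BC.b] := by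
      simp [applyM, powG_b, powG_c]
    rw [this]
    simp

theorem stmt15 (k n : ℕ) (hn : 0 < n) :
    (compM (powM G (2 * k + 2)) (compM D (powM G (n - 1)))) BC.b =
      List.replicate (2 * k + 2) BC.b ++ [BC.c, BC.b] ∧
    (compM (powM G (2 * k + 2)) (compM D (powM G (n - 1)))) BC.c =
      wpow (List.replicate (2 * k + 2) BC.b ++ [BC.c, BC.b]) (n - 1) ++
        List.replicate (2 * k + 2) BC.b ++ [BC.c] := by
  constructor
  · show applyM (powM G (2 * k + 2)) (applyM D (powM G (n - 1) BC.b)) = _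
    rw [powG_b]
    show applyM (powM G (2 * k + 2)) (D BC.b ++ []) = _
    simp [D, applyM, powG_b, powG_c]
  · show applyM (powM G (2 * k + 2)) (applyM D (powM G (n - 1) BC.c)) = _
    rw [powG_c, applyD, applyPowG]
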